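/- Assume m ≥ 2, a > 0, b ∈ ℝ, c = 2/a − 1, and define K(x,y) = (‖x‖ ‖y‖)^{−ab/2} exp( −(2i/a) ⟨x,y⟩ (‖x‖ ‖y‖)^{a/2−1} ) and h(x) = ‖x‖^{ a b − (1 − a/2) m }. Then for every y ≠ 0: ∫_{ℝᵐ} K(x,y) ‖x‖^{−ab/2} e^{−‖x‖^a / a} h(x) dx = (2π)^{m/2} (2/a)^{1 − m/2} ‖y‖^{−ab/2} e^{−‖y‖^a / a}. (The normalization integral, computed via the Funk–Hecke theorem, which determines the constant d = (2π)^{−m/2}(2/a)^{m/2−1} in the explicit deformed Fourier transform for k = 0.) -/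

import Mathlib

open Real

/-- `j`-th partial derivative of a complex-valued function on Euclidean space. -/
noncomputable def pdC {m : ℕ} (j : Fin m) (f : EuclideanSpace ℝ (Fin m) → ℂ)
    (x : EuclideanSpace ℝ (Fin m)) : ℂ :=
  fderiv ℝ f x (EuclideanSpace.single j 1)

/-- The kernel
`K(x,y) = (‖x‖‖y‖)^{-ab/2} exp(-(2i/a) ⟨x,y⟩ (‖x‖‖y‖)^{a/2-1})` of the deformed
Fourier transform (case `c = 2/a - 1`, `k = 0`). -/
noncomputable def Kker (m : ℕ) (a b : ℝ) (x y : EuclideanSpace ℝ (Fin m)) : ℂ :=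
  (((‖x‖ * ‖y‖) ^ (-(a * b) / 2) : ℝ) : ℂ)
    * Complex.exp (-(2 * Complex.I / (a : ℂ)) * ((∑ j, x j * y j : ℝ) : ℂ)
        * (((‖x‖ * ‖y‖) ^ (a / 2 - 1) : ℝ) : ℂ))

open MeasureTheory

section Aux

open Matrix FourierTransform
open scoped RealInnerProductSpace

/-- The radial deformation `x ↦ (lam ‖x‖^α) • x`. -/
noncomputable def auxPhi (m : ℕ) (lam α : ℝ) (x : EuclideanSpace ℝ (Fin m)) :
    EuclideanSpace ℝ (Fin m) := (lam * ‖x‖ ^ α) • x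

/-- Its derivative at `x ≠ 0`. -/
noncomputable def auxPhiD (m : ℕ) (lam α : ℝ) (x : EuclideanSpace ℝ (Fin m)) :
    EuclideanSpace ℝ (Fin m) →L[ℝ] EuclideanSpace ℝ (Fin m) :=
  (lam * ‖x‖ ^ α) • ContinuousLinearMap.id ℝ _
    + (lam * α * ‖x‖ ^ (α - 2)) • ((innerSL ℝ x).smulRight x)

lemma aux_rpow_sq_half (t : ℝ) (ht : 0 ≤ t) (p : ℝ) : (t^2 : ℝ) ^ (p/2) = t ^ p := by
  rw [← Real.rpow_natCast t 2, ← Real.rpow_mul ht]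
  congr 1
  push_cast
  ring

lemma hasFDerivAt_auxPhi (m : ℕ) (lam α : ℝ) (x : EuclideanSpace ℝ (Fin m)) (hx : x ≠ 0) :
    HasFDerivAt (auxPhi m lam α) (auxPhiD m lam α x) x := by
  have hn : (0:ℝ) < ‖x‖ := norm_pos_iff.mpr hx
  have hq : HasFDerivAt (fun z : EuclideanSpace ℝ (Fin m) => ‖z‖^2) (2 • innerSL ℝ x) x :=
    (hasStrictFDerivAt_norm_sq x).hasFDerivAt
  have hq2 : (‖x‖^2 : ℝ) ≠ 0 := by positivity
  have hr := hq.rpow_const (p := α/2) (Or.inl hq2)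
  have hc := hr.const_mul lam
  have h := hc.smul (hasFDerivAt_id x)
  have e1 : ∀ z : EuclideanSpace ℝ (Fin m), lam * (‖z‖^2 : ℝ) ^ (α/2) = lam * ‖z‖ ^ α := by
    intro z; rw [aux_rpow_sq_half _ (norm_nonneg z)]
  have e2 : (‖x‖^2 : ℝ) ^ (α/2 - 1) = ‖x‖ ^ (α - 2) := by
    rw [show α/2 - 1 = (α - 2)/2 by ring, aux_rpow_sq_half _ (norm_nonneg x)]
  convert! h using 1
  · funext z; simp only [auxPhi, e1, id_eq, Pi.smul_apply']
  · refine ContinuousLinearMap.ext fun h' => ?_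
    simp only [auxPhiD, e1, e2, ContinuousLinearMap.add_apply, ContinuousLinearMap.smul_apply,
      ContinuousLinearMap.id_apply, ContinuousLinearMap.smulRight_apply, innerSL_apply_apply,
      ContinuousLinearMap.coe_smul', Pi.smul_apply, smul_smul, id_eq, nsmul_eq_mul,
      smul_eq_mul]
    module

lemma det_auxPhiD (m : ℕ) (lam α : ℝ) (x : EuclideanSpace ℝ (Fin m)) (hx : x ≠ 0) :
    (auxPhiD m lam α x).det = (lam * ‖x‖ ^ α)^m * (1 + α) := by
  classical
  have hn : (0:ℝ) < ‖x‖ := norm_pos_iff.mpr hx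
  have hn2 : (‖x‖^2 : ℝ) ≠ 0 := by positivity
  set B := (EuclideanSpace.basisFun (Fin m) ℝ).toBasis with hB
  rw [ContinuousLinearMap.det, ← LinearMap.det_toMatrix B]
  have hM : LinearMap.toMatrix B B ((auxPhiD m lam α x) :
        EuclideanSpace ℝ (Fin m) →ₗ[ℝ] EuclideanSpace ℝ (Fin m))
      = (lam * ‖x‖ ^ α) •
        (1 + Matrix.replicateCol Unit (fun i => x i) * Matrix.replicateRow Unit (fun j => (α / ‖x‖^2) * x j)) := by
    ext i j
    have key : lam * α * ‖x‖ ^ (α - 2) = (lam * ‖x‖ ^ α) * (α / ‖x‖^2) := by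
      rw [show α - 2 = α + (-2 : ℝ) by ring, Real.rpow_add hn, Real.rpow_neg hn.le,
        show ((2:ℝ)) = ((2:ℕ):ℝ) by norm_num, Real.rpow_natCast]
      field_simp
    simp only [LinearMap.toMatrix_apply, hB, OrthonormalBasis.coe_toBasis,
      OrthonormalBasis.coe_toBasis_repr_apply, EuclideanSpace.basisFun_apply,
      EuclideanSpace.basisFun_repr, ContinuousLinearMap.coe_coe, auxPhiD,
      ContinuousLinearMap.add_apply, ContinuousLinearMap.smul_apply,
      ContinuousLinearMap.id_apply, ContinuousLinearMap.smulRight_apply, innerSL_apply_apply,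
      EuclideanSpace.inner_single_right, Matrix.smul_apply, Matrix.add_apply,
      Matrix.one_apply, Matrix.mul_apply, Matrix.replicateCol_apply, Matrix.replicateRow_apply,
      PiLp.add_apply, PiLp.smul_apply, EuclideanSpace.single_apply, smul_eq_mul,
      Finset.sum_const, Finset.card_univ, Fintype.card_unit, one_smul, conj_trivial]
    rw [key]
    by_cases hij : i = j <;> simp [hij] <;> ring
  rw [hM, Matrix.det_smul, Matrix.det_one_add_replicateCol_mul_replicateRow]
  have hdot : dotProduct (fun j => (α / ‖x‖^2) * x j) (fun i => x i) = α := by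
    simp only [dotProduct, mul_assoc, ← Finset.mul_sum]
    have : ∑ i, x i * x i = ‖x‖^2 := by
      rw [EuclideanSpace.norm_eq, Real.sq_sqrt (by positivity)]
      simp [sq]
    rw [this]
    field_simp
  rw [hdot]
  simp only [Fintype.card_fin]

lemma norm_auxPhi (m : ℕ) (lam α : ℝ) (hlam : 0 < lam) (x : EuclideanSpace ℝ (Fin m))
    (hx : x ≠ 0) : ‖auxPhi m lam α x‖ = lam * ‖x‖ ^ (α + 1) := by
  have hn : (0:ℝ) < ‖x‖ := norm_pos_iff.mpr hx
  rw [auxPhi, norm_smul, Real.norm_eq_abs, abs_of_pos (by positivity),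
    Real.rpow_add hn, Real.rpow_one]
  ring

lemma auxPhi_left_inv (m : ℕ) (lam α : ℝ) (hlam : 0 < lam) (hβ : α + 1 ≠ 0)
    (x : EuclideanSpace ℝ (Fin m)) (hx : x ≠ 0) :
    auxPhi m (lam ^ (-(α+1)⁻¹)) ((α+1)⁻¹ - 1) (auxPhi m lam α x) = x := by
  have hn : (0:ℝ) < ‖x‖ := norm_pos_iff.mpr hx
  rw [auxPhi, norm_auxPhi m lam α hlam x hx, auxPhi, smul_smul]
  have hcoe : lam ^ (-(α+1)⁻¹) * (lam * ‖x‖ ^ (α + 1)) ^ ((α+1)⁻¹ - 1) * (lam * ‖x‖ ^ α)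
      = 1 := by
    rw [Real.mul_rpow hlam.le (Real.rpow_nonneg hn.le _), ← Real.rpow_mul hn.le]
    rw [show lam * ‖x‖ ^ α = lam ^ (1:ℝ) * ‖x‖ ^ α by rw [Real.rpow_one]]
    rw [show lam ^ (-(α+1)⁻¹) * (lam ^ ((α+1)⁻¹ - 1) * ‖x‖ ^ ((α + 1) * ((α+1)⁻¹ - 1)))
          * (lam ^ (1:ℝ) * ‖x‖ ^ α)
        = (lam ^ (-(α+1)⁻¹) * lam ^ ((α+1)⁻¹ - 1) * lam ^ (1:ℝ))
          * (‖x‖ ^ ((α + 1) * ((α+1)⁻¹ - 1)) * ‖x‖ ^ α) by ring]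
    rw [← Real.rpow_add hlam, ← Real.rpow_add hlam, ← Real.rpow_add hn]
    rw [show -(α+1)⁻¹ + ((α+1)⁻¹ - 1) + 1 = 0 by ring,
      show (α + 1) * ((α+1)⁻¹ - 1) + α = 0 by field_simp; ring]
    simp
  rw [hcoe, one_smul]

end Aux

section GaussAux

open FourierTransform
open scoped RealInnerProductSpace

lemma aux_gauss_int (m : ℕ) (v : EuclideanSpace ℝ (Fin m)) :
    ∫ u : EuclideanSpace ℝ (Fin m),
      Complex.exp ((↑(-⟪u, v⟫) * Complex.I) + ↑(-(1/2 : ℝ) * ‖u‖^2))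
      = ((2 * π) ^ ((m : ℝ) / 2) : ℝ) * Complex.exp (↑(-(1/2 : ℝ) * ‖v‖^2)) := by
  have h := fourier_gaussian_innerProductSpace (V := EuclideanSpace ℝ (Fin m))
    (b := (1/2 : ℂ)) (by norm_num) ((2 * π)⁻¹ • v)
  rw [Real.fourier_eq'] at h
  have hπ : (π : ℝ) ≠ 0 := Real.pi_ne_zero
  have h1 : ∀ t : ℝ, (-2*π*((2*π)⁻¹ * t)) = -t := by intro t; field_simp
  have h2 : ‖(2 * π)⁻¹ • v‖ = (2*π)⁻¹ * ‖v‖ := by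
    rw [norm_smul, Real.norm_eq_abs, abs_of_pos (by positivity)]
  simp only [real_inner_smul_right, smul_eq_mul, ← Complex.exp_add, h1, h2,
    finrank_euclideanSpace_fin] at h
  rw [show ((π:ℂ)/(1/2)) = (((2*π : ℝ)):ℂ) by push_cast; ring,
    show ((m:ℂ)/2) = ((((m:ℝ)/2) : ℝ) : ℂ) by push_cast; ring,
    ← Complex.ofReal_cpow (by positivity)] at h
  have h3 : ∀ u : EuclideanSpace ℝ (Fin m), (↑(-(1/2:ℝ) * ‖u‖^2) : ℂ) = -(1/2) * (‖u‖:ℂ)^2 := by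
    intro u; push_cast; ring
  simp only [h3]
  rw [h]
  have hπc : (π:ℂ) ≠ 0 := by exact_mod_cast hπ
  push_cast
  field_simp

end GaussAux

theorem stmt_15 (m : ℕ) (hm : 2 ≤ m) (a b : ℝ) (ha : 0 < a)
    (y : EuclideanSpace ℝ (Fin m)) (hy : y ≠ 0) :
    ∫ x : EuclideanSpace ℝ (Fin m),
        Kker m a b x y
          * ((‖x‖ ^ (-(a * b) / 2) * Real.exp (-‖x‖ ^ a / a)
              * ‖x‖ ^ (a * b - (1 - a / 2) * m) : ℝ) : ℂ)
      = (((2 * Real.pi) ^ ((m : ℝ) / 2) * (2 / a) ^ (1 - (m : ℝ) / 2)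
          * ‖y‖ ^ (-(a * b) / 2) * Real.exp (-‖y‖ ^ a / a) : ℝ) : ℂ) := by
  classical
  have hm0 : (0:ℕ) < m := by omega
  haveI : Nonempty (Fin m) := ⟨⟨0, hm0⟩⟩
  have ha2 : (0:ℝ) < 2 / a := by positivity
  have haC : (a:ℂ) ≠ 0 := by exact_mod_cast ha.ne'
  set lam : ℝ := Real.sqrt (2/a) with hlamdef
  have hlam : 0 < lam := Real.sqrt_pos.mpr ha2
  have hlamsq : lam^2 = 2/a := Real.sq_sqrt ha2.le
  have hβ0 : (a/2 - 1) + 1 ≠ 0 := by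
    have : (a/2 - 1) + 1 = a/2 := by ring
    rw [this]; positivity
  have hy' : (0:ℝ) < ‖y‖ := norm_pos_iff.mpr hy
  set v : EuclideanSpace ℝ (Fin m) := auxPhi m lam (a/2-1) y with hv
  set G : EuclideanSpace ℝ (Fin m) → ℂ := fun u =>
    Complex.exp ((↑(-(inner ℝ u v : ℝ)) * Complex.I) + ↑(-(1/2 : ℝ) * ‖u‖^2)) with hG
  set Cr : ℝ := ‖y‖ ^ (-(a*b)/2) * (lam^m * (a/2))⁻¹ with hCr
  -- basic positivity
  have hlam' : (0:ℝ) < lam ^ (-((a/2-1)+1)⁻¹) := Real.rpow_pos_of_pos hlam _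
  have hPhine : ∀ x : EuclideanSpace ℝ (Fin m), x ≠ 0 → auxPhi m lam (a/2-1) x ≠ 0 := by
    intro x hx
    have hn : (0:ℝ) < ‖x‖ := norm_pos_iff.mpr hx
    have : (0:ℝ) < lam * ‖x‖ ^ (a/2-1) := mul_pos hlam (Real.rpow_pos_of_pos hn _)
    exact smul_ne_zero this.ne' hx
  have hPhine' : ∀ u : EuclideanSpace ℝ (Fin m), u ≠ 0 →
      auxPhi m (lam ^ (-((a/2-1)+1)⁻¹)) (((a/2-1)+1)⁻¹ - 1) u ≠ 0 := by
    intro u hu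
    have hn : (0:ℝ) < ‖u‖ := norm_pos_iff.mpr hu
    have : (0:ℝ) < lam ^ (-((a/2-1)+1)⁻¹) * ‖u‖ ^ (((a/2-1)+1)⁻¹ - 1) :=
      mul_pos hlam' (Real.rpow_pos_of_pos hn _)
    exact smul_ne_zero this.ne' hu
  have hright : ∀ u : EuclideanSpace ℝ (Fin m), u ≠ 0 →
      auxPhi m lam (a/2-1) (auxPhi m (lam ^ (-((a/2-1)+1)⁻¹)) (((a/2-1)+1)⁻¹ - 1) u) = u := by
    intro u hu
    have hβ0' : (((a/2-1)+1)⁻¹ - 1) + 1 ≠ 0 := by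
      rw [show (((a/2-1)+1)⁻¹ - 1) + 1 = ((a/2-1)+1)⁻¹ by ring]
      exact inv_ne_zero hβ0
    have h := auxPhi_left_inv m _ _ hlam' hβ0' u hu
    rw [show ((((a/2-1)+1)⁻¹ - 1) + 1)⁻¹ - 1 = (a/2-1) by
        rw [show (((a/2-1)+1)⁻¹ - 1) + 1 = ((a/2-1)+1)⁻¹ by ring, inv_inv]; ring,
      show (lam ^ (-((a/2-1)+1)⁻¹)) ^ (-((((a/2-1)+1)⁻¹ - 1) + 1)⁻¹) = lam by
        rw [show (((a/2-1)+1)⁻¹ - 1) + 1 = ((a/2-1)+1)⁻¹ by ring, inv_inv,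
          ← Real.rpow_mul hlam.le, show -((a/2-1)+1)⁻¹ * -((a/2-1)+1) = 1 by
            rw [neg_mul_neg, inv_mul_cancel₀ hβ0], Real.rpow_one]] at h
    exact h
  have hinj : Set.InjOn (auxPhi m lam (a/2-1)) ({0}ᶜ : Set (EuclideanSpace ℝ (Fin m))) := by
    intro x hx x' hx' h
    have h1 := auxPhi_left_inv m lam (a/2-1) hlam hβ0 x (Set.mem_compl_singleton_iff.mp hx)
    have h2 := auxPhi_left_inv m lam (a/2-1) hlam hβ0 x' (Set.mem_compl_singleton_iff.mp hx')
    rw [← h1, ← h2, h]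
  have himg : auxPhi m lam (a/2-1) '' ({0}ᶜ : Set (EuclideanSpace ℝ (Fin m))) = {0}ᶜ := by
    ext u
    constructor
    · rintro ⟨x, hx, rfl⟩
      exact Set.mem_compl_singleton_iff.mpr (hPhine x (Set.mem_compl_singleton_iff.mp hx))
    · intro hu
      have hu' := Set.mem_compl_singleton_iff.mp hu
      exact ⟨_, Set.mem_compl_singleton_iff.mpr (hPhine' u hu'), hright u hu'⟩
  have hmeas : MeasurableSet ({0}ᶜ : Set (EuclideanSpace ℝ (Fin m))) :=
    (measurableSet_singleton 0).compl
  have hder : ∀ x ∈ ({0}ᶜ : Set (EuclideanSpace ℝ (Fin m))),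
      HasFDerivWithinAt (auxPhi m lam (a/2-1)) (auxPhiD m lam (a/2-1) x) ({0}ᶜ) x :=
    fun x hx => (hasFDerivAt_auxPhi m lam (a/2-1) x
      (Set.mem_compl_singleton_iff.mp hx)).hasFDerivWithinAt
  have hcv := integral_image_eq_integral_abs_det_fderiv_smul volume hmeas hder hinj G
  rw [himg] at hcv
  have h0 : (volume : Measure (EuclideanSpace ℝ (Fin m))) {0} = 0 := measure_singleton 0
  have hae : ({0}ᶜ : Set (EuclideanSpace ℝ (Fin m))) =ᵐ[volume] Set.univ := by
    rw [MeasureTheory.ae_eq_univ, compl_compl]; exact h0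
  -- the pointwise identity
  have hpt : ∀ x ∈ ({0}ᶜ : Set (EuclideanSpace ℝ (Fin m))),
      Kker m a b x y * ((‖x‖ ^ (-(a * b) / 2) * Real.exp (-‖x‖ ^ a / a)
          * ‖x‖ ^ (a * b - (1 - a / 2) * m) : ℝ) : ℂ)
        = (Cr:ℂ) * ((|(auxPhiD m lam (a/2-1) x).det|) • G (auxPhi m lam (a/2-1) x)) := by
    intro x hxmem
    have hx : x ≠ 0 := Set.mem_compl_singleton_iff.mp hxmem
    have hn : (0:ℝ) < ‖x‖ := norm_pos_iff.mpr hx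
    have hdet : |(auxPhiD m lam (a/2-1) x).det| = lam^m * ‖x‖^((a/2-1) * m) * (a/2) := by
      rw [det_auxPhiD m lam (a/2-1) x hx, show (1:ℝ) + (a/2-1) = a/2 by ring, mul_pow,
        ← Real.rpow_natCast (‖x‖ ^ (a/2-1)) m, ← Real.rpow_mul (norm_nonneg x)]
      exact abs_of_pos (mul_pos (mul_pos (pow_pos hlam m)
        (Real.rpow_pos_of_pos hn _)) (by positivity))
    have hPhin2 : ‖auxPhi m lam (a/2-1) x‖^2 = 2/a * ‖x‖^a := by
      rw [norm_auxPhi m lam (a/2-1) hlam x hx, mul_pow, hlamsq,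
        show (a/2-1) + 1 = a/2 by ring]
      congr 1
      rw [← Real.rpow_natCast (‖x‖ ^ (a/2)) 2, ← Real.rpow_mul (norm_nonneg x)]
      congr 1
      push_cast; ring
    have hinner : (inner ℝ (auxPhi m lam (a/2-1) x) v : ℝ)
        = 2/a * ((‖x‖*‖y‖) ^ (a/2-1)) * (∑ j, x j * y j) := by
      rw [hv]
      show (inner ℝ ((lam * ‖x‖ ^ (a/2-1)) • x) ((lam * ‖y‖ ^ (a/2-1)) • y) : ℝ) = _
      rw [real_inner_smul_left, real_inner_smul_right]
      have hxy : (inner ℝ x y : ℝ) = ∑ j, x j * y j := by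
        simp [PiLp.inner_apply, RCLike.inner_apply, conj_trivial, mul_comm]
      rw [hxy, Real.mul_rpow (norm_nonneg x) (norm_nonneg y), ← hlamsq]
      ring
    have hre : (‖x‖*‖y‖) ^ (-(a*b)/2)
          * (‖x‖ ^ (-(a * b) / 2) * Real.exp (-‖x‖ ^ a / a) * ‖x‖ ^ (a * b - (1 - a / 2) * m))
        = Cr * (lam^m * ‖x‖^((a/2-1) * (m:ℝ)) * (a/2)) * Real.exp (-‖x‖ ^ a / a) := by
      have hne : lam^m * (a/2) ≠ 0 := by positivity
      have e1 : (‖x‖*‖y‖:ℝ) ^ (-(a*b)/2) = ‖x‖ ^ (-(a*b)/2) * ‖y‖ ^ (-(a*b)/2) :=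
        Real.mul_rpow (norm_nonneg x) (norm_nonneg y)
      have e2 : ‖x‖ ^ (-(a*b)/2) * ‖x‖ ^ (-(a * b) / 2) * ‖x‖ ^ (a * b - (1 - a / 2) * (m:ℝ))
          = ‖x‖ ^ ((a/2-1) * (m:ℝ)) := by
        rw [← Real.rpow_add hn, ← Real.rpow_add hn]
        congr 1
        ring
      rw [e1, hCr]
      rw [show ‖x‖ ^ (-(a*b)/2) * ‖y‖ ^ (-(a*b)/2)
            * (‖x‖ ^ (-(a * b) / 2) * Real.exp (-‖x‖ ^ a / a) * ‖x‖ ^ (a * b - (1 - a / 2) * (m:ℝ)))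
          = (‖x‖ ^ (-(a*b)/2) * ‖x‖ ^ (-(a * b) / 2) * ‖x‖ ^ (a * b - (1 - a / 2) * (m:ℝ)))
            * ‖y‖ ^ (-(a*b)/2) * Real.exp (-‖x‖ ^ a / a) from by ring, e2]
      field_simp
    -- now the complex identity
    rw [Kker, hdet, hG]
    have hexp : (-(2 * Complex.I / (a:ℂ)) * ((∑ j, x j * y j : ℝ) : ℂ)
            * (((‖x‖ * ‖y‖) ^ (a / 2 - 1) : ℝ) : ℂ)) + ((-‖x‖ ^ a / a : ℝ) : ℂ)
        = (↑(-(inner ℝ (auxPhi m lam (a/2-1) x) v : ℝ)) * Complex.I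
            + ↑(-(1/2 : ℝ) * ‖auxPhi m lam (a/2-1) x‖^2)) := by
      rw [hinner, hPhin2]
      push_cast
      field_simp
    calc (((‖x‖ * ‖y‖) ^ (-(a * b) / 2) : ℝ) : ℂ)
          * Complex.exp (-(2 * Complex.I / (a : ℂ)) * ((∑ j, x j * y j : ℝ) : ℂ)
              * (((‖x‖ * ‖y‖) ^ (a / 2 - 1) : ℝ) : ℂ))
          * ((‖x‖ ^ (-(a * b) / 2) * Real.exp (-‖x‖ ^ a / a)
              * ‖x‖ ^ (a * b - (1 - a / 2) * m) : ℝ) : ℂ)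
        = (((‖x‖ * ‖y‖) ^ (-(a * b) / 2)
              * (‖x‖ ^ (-(a * b) / 2) * Real.exp (-‖x‖ ^ a / a)
                * ‖x‖ ^ (a * b - (1 - a / 2) * m)) : ℝ) : ℂ)
            * (Complex.exp (-(2 * Complex.I / (a : ℂ)) * ((∑ j, x j * y j : ℝ) : ℂ)
                * (((‖x‖ * ‖y‖) ^ (a / 2 - 1) : ℝ) : ℂ))) := by
          push_cast; ring
      _ = (((Cr * (lam^m * ‖x‖^((a/2-1) * (m:ℝ)) * (a/2)) * Real.exp (-‖x‖ ^ a / a)) : ℝ) : ℂ)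
            * (Complex.exp (-(2 * Complex.I / (a : ℂ)) * ((∑ j, x j * y j : ℝ) : ℂ)
                * (((‖x‖ * ‖y‖) ^ (a / 2 - 1) : ℝ) : ℂ))) := by rw [hre]
      _ = (Cr:ℂ) * ((lam^m * ‖x‖^((a/2-1) * (m:ℝ)) * (a/2) : ℝ)
            • (Complex.exp ((-(2 * Complex.I / (a : ℂ)) * ((∑ j, x j * y j : ℝ) : ℂ)
                * (((‖x‖ * ‖y‖) ^ (a / 2 - 1) : ℝ) : ℂ)) + ((-‖x‖ ^ a / a : ℝ) : ℂ)))) := by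
          rw [Complex.exp_add, Complex.real_smul]
          push_cast
          ring
      _ = (Cr:ℂ) * ((lam^m * ‖x‖^((a/2-1) * (m:ℝ)) * (a/2) : ℝ)
            • Complex.exp (↑(-(inner ℝ (auxPhi m lam (a/2-1) x) v : ℝ)) * Complex.I
                + ↑(-(1/2 : ℝ) * ‖auxPhi m lam (a/2-1) x‖^2))) := by rw [hexp]
  -- assemble
  have step1 : (∫ x : EuclideanSpace ℝ (Fin m),
        Kker m a b x y * ((‖x‖ ^ (-(a * b) / 2) * Real.exp (-‖x‖ ^ a / a)
            * ‖x‖ ^ (a * b - (1 - a / 2) * m) : ℝ) : ℂ))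
      = ∫ x in ({0}ᶜ : Set (EuclideanSpace ℝ (Fin m))),
          Kker m a b x y * ((‖x‖ ^ (-(a * b) / 2) * Real.exp (-‖x‖ ^ a / a)
            * ‖x‖ ^ (a * b - (1 - a / 2) * m) : ℝ) : ℂ) := by
    rw [setIntegral_congr_set hae, setIntegral_univ]
  rw [step1, setIntegral_congr_fun hmeas hpt]
  have step2 : (∫ x in ({0}ᶜ : Set (EuclideanSpace ℝ (Fin m))),
        (Cr:ℂ) * ((|(auxPhiD m lam (a/2-1) x).det|) • G (auxPhi m lam (a/2-1) x)))
      = (Cr:ℂ) * ∫ x in ({0}ᶜ : Set (EuclideanSpace ℝ (Fin m))),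
          ((|(auxPhiD m lam (a/2-1) x).det|) • G (auxPhi m lam (a/2-1) x)) :=
    integral_const_mul _ _
  rw [step2, ← hcv, setIntegral_congr_set hae, setIntegral_univ, hG]
  rw [aux_gauss_int m v]
  -- final constants
  have hvn2 : ‖v‖^2 = 2/a * ‖y‖^a := by
    rw [hv, norm_auxPhi m lam (a/2-1) hlam y hy, mul_pow, hlamsq,
      show (a/2-1) + 1 = a/2 by ring]
    congr 1
    rw [← Real.rpow_natCast (‖y‖ ^ (a/2)) 2, ← Real.rpow_mul (norm_nonneg y)]
    congr 1
    push_cast; ring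
  have hv2 : -(1/2:ℝ) * ‖v‖^2 = -‖y‖ ^ a / a := by
    rw [hvn2]; field_simp
  have hlamm : lam^m = (2/a) ^ ((m:ℝ)/2) := by
    rw [hlamdef, Real.sqrt_eq_rpow, ← Real.rpow_natCast ((2/a) ^ ((1:ℝ)/2)) m,
      ← Real.rpow_mul ha2.le]
    congr 1
    ring
  have hkey : (lam^m * (a/2))⁻¹ = (2/a) ^ (1-(m:ℝ)/2) := by
    rw [hlamm, show (a/2 : ℝ) = ((2/a) ^ ((-1:ℝ)):ℝ) by rw [Real.rpow_neg_one, inv_div],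
      ← Real.rpow_add ha2, ← Real.rpow_neg ha2.le]
    congr 1
    ring
  rw [hv2, ← Complex.ofReal_exp, hCr]
  push_cast [hkey]
  ring
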